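/- arXiv:1712.02291 — 2 statements merged into one kernel-verified Lean document; each statement's English description precedes it below -/
import Mathlib

section
/- For any square-summable sequence a: ℤ → ℝ and Δx > 0, the following identity holds: ‖D₊D₋(a)‖²_{ℓ²_Δ} = (4/Δx²) ‖D₊(a)‖²_{ℓ²_Δ} - (4/Δx²) ‖D(a)‖²_{ℓ²_Δ}, where D = (D₊ + D₋)/2 is the centered difference. -/
noncomputable section
def Dp (Δx : ℝ) (a : ℤ → ℝ) : ℤ → ℝ := fun j => (a (j + 1) - a j) / Δx
def Dm (Δx : ℝ) (a : ℤ → ℝ) : ℤ → ℝ := fun j => (a j - a (j - 1)) / Δx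
def Dc (Δx : ℝ) (a : ℤ → ℝ) : ℤ → ℝ := fun j => (Dp Δx a j + Dm Δx a j) / 2
def l2normSq (Δx : ℝ) (a : ℤ → ℝ) : ℝ := Δx * ∑' j : ℤ, (a j) ^ 2

/-! With `d = D₊ a` one has `D₊D₋ a_j = (d_j - d_{j-1}) / Δx` and `D a_j = (d_j + d_{j-1}) / 2`.
Summing the parallelogram law `(x - y)² + (x + y)² = 2x² + 2y²` over `x = d_j`, `y = d_{j-1}`, and
using that the shift `j ↦ j - 1` preserves `∑ d_j²`, gives the identity. -/

theorem summable_sq_add {ι : Type*} {f g : ι → ℝ} (hf : Summable fun i => f i ^ 2)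
    (hg : Summable fun i => g i ^ 2) : Summable fun i => (f i + g i) ^ 2 :=
  .of_nonneg_of_le (fun _ => sq_nonneg _) (fun _ => add_sq_le) ((hf.add hg).mul_left 2)

theorem summable_sq_sub {ι : Type*} {f g : ι → ℝ} (hf : Summable fun i => f i ^ 2)
    (hg : Summable fun i => g i ^ 2) : Summable fun i => (f i - g i) ^ 2 := by
  simpa only [sub_eq_add_neg] using summable_sq_add (g := fun i => -g i) hf (by simpa only [neg_sq])

theorem tsum_sq_sub_add_tsum_sq_add {ι : Type*} {f g : ι → ℝ} (hf : Summable fun i => f i ^ 2)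
    (hg : Summable fun i => g i ^ 2) :
    ∑' i, (f i - g i) ^ 2 + ∑' i, (f i + g i) ^ 2 = 2 * ∑' i, f i ^ 2 + 2 * ∑' i, g i ^ 2 := by
  rw [← (summable_sq_sub hf hg).tsum_add (summable_sq_add hf hg), ← tsum_mul_left,
    ← tsum_mul_left, ← (hf.mul_left 2).tsum_add (hg.mul_left 2)]
  exact tsum_congr fun i => by ring

theorem summable_sq_comp_add {f : ℤ → ℝ} (hf : Summable fun j => f j ^ 2) (k : ℤ) :
    Summable fun j => f (j + k) ^ 2 :=
  (Equiv.addRight k).summable_iff.mpr hf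

theorem tsum_sq_comp_sub (f : ℤ → ℝ) (k : ℤ) : ∑' j, f (j - k) ^ 2 = ∑' j, f j ^ 2 :=
  (Equiv.subRight k).tsum_eq fun j => f j ^ 2

theorem l2normSq_div_const (Δx c : ℝ) (f : ℤ → ℝ) :
    l2normSq Δx (fun j => f j / c) = l2normSq Δx f / c ^ 2 := by
  simp only [l2normSq, div_pow, tsum_div_const, mul_div_assoc]

theorem summable_sq_Dp {Δx : ℝ} {a : ℤ → ℝ} (ha : Summable fun j => a j ^ 2) :
    Summable fun j => Dp Δx a j ^ 2 := by
  simpa only [Dp, div_pow] using (summable_sq_sub (summable_sq_comp_add ha 1) ha).div_const _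

theorem Dm_apply_eq_Dp (Δx : ℝ) (a : ℤ → ℝ) (j : ℤ) : Dm Δx a j = Dp Δx a (j - 1) := by
  simp only [Dm, Dp, sub_add_cancel]

theorem Dp_Dm_eq (Δx : ℝ) (a : ℤ → ℝ) :
    Dp Δx (Dm Δx a) = fun j => (Dp Δx a j - Dp Δx a (j - 1)) / Δx := by
  ext j
  simp only [Dp, Dm_apply_eq_Dp, add_sub_cancel_right]

theorem Dc_eq (Δx : ℝ) (a : ℤ → ℝ) : Dc Δx a = fun j => (Dp Δx a j + Dp Δx a (j - 1)) / 2 := by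
  ext j
  rw [Dc, Dm_apply_eq_Dp]

theorem stmt4_general (Δx : ℝ) (a : ℤ → ℝ)
    (ha : Summable fun j : ℤ => (a j) ^ 2) :
    l2normSq Δx (Dp Δx (Dm Δx a))
      = 4 / Δx ^ 2 * l2normSq Δx (Dp Δx a) - 4 / Δx ^ 2 * l2normSq Δx (Dc Δx a) := by
  set d := Dp Δx a
  have hd : Summable fun j => d j ^ 2 := summable_sq_Dp ha
  have parallelogram := tsum_sq_sub_add_tsum_sq_add (g := fun j => d (j - 1)) hd
    (by simpa only [← sub_eq_add_neg] using summable_sq_comp_add hd (-1))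
  rw [tsum_sq_comp_sub] at parallelogram
  rw [Dp_Dm_eq, Dc_eq, l2normSq_div_const, l2normSq_div_const]
  simp only [l2normSq]
  rw [eq_sub_of_add_eq parallelogram]
  ring

/-- `‖D₊D₋(a)‖²_{ℓ²_Δ} = (4/Δx²)‖D₊(a)‖²_{ℓ²_Δ} - (4/Δx²)‖D(a)‖²_{ℓ²_Δ}`. -/
theorem stmt4 (Δx : ℝ) (hΔx : 0 < Δx) (a : ℤ → ℝ)
    (ha : Summable fun j : ℤ => (a j) ^ 2) :
    l2normSq Δx (Dp Δx (Dm Δx a))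
      = 4 / Δx ^ 2 * l2normSq Δx (Dp Δx a) - 4 / Δx ^ 2 * l2normSq Δx (Dc Δx a) :=
  stmt4_general Δx a ha
end
end

section
/- Let Δx, Δt > 0 and θ ∈ [0,1] satisfy the CFL condition Δt(1 - 2θ) ≤ Δx³/4. Then for any a ∈ ℓ²(ℤ): ‖a - (1-θ)Δt·D₊D₊D₋(a)‖²_{ℓ²_Δ} ≤ ‖a + θΔt·D₊D₊D₋(a)‖²_{ℓ²_Δ}. -/
/-!
Let `S` be the unit shift of `ℓ²(ℤ)`, a unitary operator. Then `δ² = S - 2 + S⁻¹ = (S - 1)(1 - S⁻¹)`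
and `δ³ = (S - 1)δ²`, so unitarity gives `⟪a, δ³a⟫ = ½‖δ²a‖²` (summation by parts twice) and
`‖δ³a‖ ≤ 2‖δ²a‖`. With `s = Δt/Δx³`, expanding the squares gives
`‖a + θsδ³a‖² - ‖a - (1-θ)sδ³a‖² = s‖δ²a‖² + (2θ-1)s²‖δ³a‖²`, which is nonnegative for `θ ≥ 1/2`
and at least `s‖δ²a‖²(1 - 4(1-2θ)s) ≥ 0` otherwise, by the CFL condition.
-/

noncomputable section
def D3 (Δx : ℝ) (a : ℤ → ℝ) : ℤ → ℝ :=
  fun j => (a (j + 2) - 3 * a (j + 1) + 3 * a j - a (j - 1)) / Δx ^ 3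
open scoped InnerProductSpace lp

section Reindex

variable {ι κ E : Type*} [NormedAddCommGroup E] {p : ENNReal}

theorem Memℓp.comp_equiv (hp : 0 < p.toReal) (e : ι ≃ κ) {f : κ → E}
    (hf : Memℓp f p) : Memℓp (f ∘ e) p := by
  rw [memℓp_gen_iff hp] at hf ⊢
  exact (e.summable_iff (f := fun i => ‖f i‖ ^ p.toReal)).mpr hf

variable (𝕜 : Type*) [NormedField 𝕜] [NormedSpace 𝕜 E] [Fact (1 ≤ p)]

def lp.compEquiv (hp : 0 < p.toReal) (e : ι ≃ κ) : ℓ^p(κ, E) ≃ₗᵢ[𝕜] ℓ^p(ι, E) where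
  toFun f := ⟨f ∘ e, (lp.memℓp f).comp_equiv hp e⟩
  invFun f := ⟨f ∘ e.symm, (lp.memℓp f).comp_equiv hp e.symm⟩
  map_add' _ _ := rfl
  map_smul' _ _ := rfl
  left_inv f := by ext; simp
  right_inv f := by ext; simp
  norm_map' f := by
    simp only [LinearEquiv.coe_mk, lp.norm_eq_tsum_rpow hp]
    exact congrArg (· ^ (1 / p.toReal)) (e.tsum_eq fun k => ‖f k‖ ^ p.toReal)

end Reindex

section DifferenceOperators

variable {E : Type*} [NormedAddCommGroup E] [InnerProductSpace ℝ E]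

theorem LinearIsometry.inner_map_sub_self (S : E →ₗᵢ[ℝ] E) (v : E) :
    ⟪v, S v - v⟫_ℝ = -(‖S v - v‖ ^ 2 / 2) := by
  rw [norm_sub_sq_real, S.norm_map, inner_sub_right, real_inner_self_eq_norm_sq,
    real_inner_comm]
  ring

theorem LinearIsometry.norm_map_sub_self_le (S : E →ₗᵢ[ℝ] E) (v : E) :
    ‖S v - v‖ ≤ 2 * ‖v‖ := by
  linarith [norm_sub_le (S v) v, S.norm_map v]

theorem LinearIsometryEquiv.inner_map_sub_self_right (S : E ≃ₗᵢ[ℝ] E) (a w : E) :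
    ⟪a, S w - w⟫_ℝ = -⟪a - S.symm a, w⟫_ℝ := by
  rw [inner_sub_right, inner_sub_left, real_inner_comm (S w), S.inner_map_eq_flip,
    real_inner_comm (S.symm a) w]
  ring

variable (S : E ≃ₗᵢ[ℝ] E)

/- For the unit shift of `ℓ²(ℤ)`, `secondDiff` is `Δx² D₊D₋` and `thirdDiff` is `Δx³ D₊D₊D₋`. -/
def secondDiff (a : E) : E := S a - (2 : ℝ) • a + S.symm a

def thirdDiff (a : E) : E := S (secondDiff S a) - secondDiff S a

theorem secondDiff_eq (a : E) : secondDiff S a = S (a - S.symm a) - (a - S.symm a) := by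
  rw [secondDiff, map_sub, S.apply_symm_apply, two_smul]
  abel

theorem inner_thirdDiff (a : E) : ⟪a, thirdDiff S a⟫_ℝ = ‖secondDiff S a‖ ^ 2 / 2 := by
  rw [thirdDiff, S.inner_map_sub_self_right, secondDiff_eq]
  exact neg_eq_iff_eq_neg.mpr (S.toLinearIsometry.inner_map_sub_self _)

theorem norm_thirdDiff_le (a : E) : ‖thirdDiff S a‖ ≤ 2 * ‖secondDiff S a‖ :=
  S.toLinearIsometry.norm_map_sub_self_le _

theorem norm_sub_smul_thirdDiff_sq_le {s θ : ℝ} (hs : 0 ≤ s) (hCFL : (1 - 2 * θ) * s ≤ 1 / 4)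
    (a : E) :
    ‖a - ((1 - θ) * s) • thirdDiff S a‖ ^ 2 ≤ ‖a + (θ * s) • thirdDiff S a‖ ^ 2 := by
  have hab := inner_thirdDiff S a
  have hb := norm_thirdDiff_le S a
  set b := thirdDiff S a
  set w := ‖secondDiff S a‖
  have hgain : ‖a + (θ * s) • b‖ ^ 2 - ‖a - ((1 - θ) * s) • b‖ ^ 2
      = s * w ^ 2 + (2 * θ - 1) * s ^ 2 * ‖b‖ ^ 2 := by
    rw [norm_add_sq_real, norm_sub_sq_real, inner_smul_right, inner_smul_right, norm_smul,
      norm_smul, hab, Real.norm_eq_abs, Real.norm_eq_abs, mul_pow, mul_pow, sq_abs, sq_abs]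
    ring
  rcases le_or_gt 0 (2 * θ - 1) with hθ | hθ
  · nlinarith [mul_nonneg (mul_nonneg hθ (sq_nonneg s)) (sq_nonneg ‖b‖), sq_nonneg w]
  · have hb2 : ‖b‖ ^ 2 ≤ 4 * w ^ 2 := by nlinarith [norm_nonneg b]
    have hθ' : 0 ≤ 1 - 2 * θ := by linarith
    have hcfl' : 0 ≤ 1 - 4 * ((1 - 2 * θ) * s) := by linarith
    nlinarith [mul_le_mul_of_nonneg_left hb2 (mul_nonneg hθ' (sq_nonneg s)),
      mul_nonneg (mul_nonneg hs (sq_nonneg w)) hcfl']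

end DifferenceOperators

theorem memℓp_two_iff_summable_sq {ι : Type*} {f : ι → ℝ} :
    Memℓp f 2 ↔ Summable fun i => f i ^ 2 := by
  simp [memℓp_gen_iff]

def shiftL2 : ℓ²(ℤ, ℝ) ≃ₗᵢ[ℝ] ℓ²(ℤ, ℝ) := lp.compEquiv ℝ (by norm_num) (Equiv.addRight 1)

@[simp]
theorem shiftL2_apply (f : ℓ²(ℤ, ℝ)) (j : ℤ) : shiftL2 f j = f (j + 1) := rfl

@[simp]
theorem shiftL2_symm_apply (f : ℓ²(ℤ, ℝ)) (j : ℤ) : shiftL2.symm f j = f (j - 1) := rfl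

theorem thirdDiff_shiftL2_apply (f : ℓ²(ℤ, ℝ)) (j : ℤ) :
    thirdDiff shiftL2 f j = f (j + 2) - 3 * f (j + 1) + 3 * f j - f (j - 1) := by
  simp only [thirdDiff, secondDiff, lp.coeFn_sub, lp.coeFn_add, lp.coeFn_smul, Pi.sub_apply,
    Pi.add_apply, Pi.smul_apply, smul_eq_mul, shiftL2_apply, shiftL2_symm_apply,
    add_assoc, add_sub_cancel_right]
  ring_nf

theorem l2normSq_coe (Δx : ℝ) (f : ℓ²(ℤ, ℝ)) : l2normSq Δx f = Δx * ‖f‖ ^ 2 := by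
  rw [← real_inner_self_eq_norm_sq, lp.inner_eq_tsum]
  simp [l2normSq, sq]

theorem stmt15_general (Δx Δt θ : ℝ) (hΔx : 0 < Δx) (hΔt : 0 < Δt)
    (hCFL : Δt * (1 - 2 * θ) ≤ Δx ^ 3 / 4)
    (a : ℤ → ℝ) (ha : Summable fun j : ℤ => (a j) ^ 2) :
    l2normSq Δx (fun j => a j - (1 - θ) * Δt * D3 Δx a j)
      ≤ l2normSq Δx (fun j => a j + θ * Δt * D3 Δx a j) := by
  let A : ℓ²(ℤ, ℝ) := ⟨a, memℓp_two_iff_summable_sq.mpr ha⟩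
  have hD3 (c : ℝ) : (fun j => c * Δt * D3 Δx a j)
      = ⇑((c * (Δt / Δx ^ 3)) • thirdDiff shiftL2 A) := by
    funext j
    simp only [lp.coeFn_smul, Pi.smul_apply, smul_eq_mul, thirdDiff_shiftL2_apply, D3]
    ring
  have hCFL' : (1 - 2 * θ) * (Δt / Δx ^ 3) ≤ 1 / 4 := by
    rw [mul_div_assoc', div_le_iff₀ (by positivity)]
    linarith
  have hsub : (fun j => a j - (1 - θ) * Δt * D3 Δx a j)
      = ⇑(A - ((1 - θ) * (Δt / Δx ^ 3)) • thirdDiff shiftL2 A) := by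
    rw [lp.coeFn_sub, ← hD3]; rfl
  have hadd : (fun j => a j + θ * Δt * D3 Δx a j)
      = ⇑(A + (θ * (Δt / Δx ^ 3)) • thirdDiff shiftL2 A) := by
    rw [lp.coeFn_add, ← hD3]; rfl
  rw [hsub, hadd, l2normSq_coe, l2normSq_coe]
  exact mul_le_mul_of_nonneg_left
    (norm_sub_smul_thirdDiff_sq_le shiftL2 (by positivity) hCFL' A) hΔx.le

/-- Under the CFL condition `Δt(1-2θ) ≤ Δx³/4`,
`‖𝒜_{-(1-θ)} a‖²_{ℓ²_Δ} ≤ ‖𝒜_θ a‖²_{ℓ²_Δ}`. -/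
theorem stmt15 (Δx Δt θ : ℝ) (hΔx : 0 < Δx) (hΔt : 0 < Δt)
    (hθ : θ ∈ Set.Icc (0:ℝ) 1) (hCFL : Δt * (1 - 2 * θ) ≤ Δx ^ 3 / 4)
    (a : ℤ → ℝ) (ha : Summable fun j : ℤ => (a j) ^ 2) :
    l2normSq Δx (fun j => a j - (1 - θ) * Δt * D3 Δx a j)
      ≤ l2normSq Δx (fun j => a j + θ * Δt * D3 Δx a j) :=
  stmt15_general Δx Δt θ hΔx hΔt hCFL a ha
end
end
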